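/- arXiv:1012.5542 — 2 statements merged into one kernel-verified Lean document; each statement's English description precedes it below -/
import Mathlib

section
/- For each r ≥ 1, the r-norm ‖·‖_{B^r} on pointed k-chains, defined as the infimum of Σ|Δ^{j_i}_{U_i}(p_i;α_i)|_{j_i} over all decompositions A = Σ Δ^{j_i}_{U_i}(p_i;α_i) with 0 ≤ j_i ≤ r, is a seminorm. -/
/-! Pointed chains: finitely supported functions from points of `E` to "k-vectors" in `V`,
difference chains, and the `B^r` norms of J. Harrison's theory of differential chains. -/

open Finsupp

variable {E V : Type*} [NormedAddCommGroup E] [NormedSpace ℝ E]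
  [NormedAddCommGroup V] [NormedSpace ℝ V]

/-- The difference chain `Δ^j_U (p; α)`, for a list `U = [u₁,…,u_j]` of vectors. -/
noncomputable def diffChain : List E → E → V → (E →₀ V)
  | [], p, α => Finsupp.single p α
  | u :: U, p, α => Finsupp.mapDomain (· + u) (diffChain U p α) - diffChain U p α

/-- The weight `|Δ^j_U(p;α)|_j := ‖u₁‖⋯‖u_j‖‖α‖` of a difference chain. -/
noncomputable def dweight (U : List E) (α : V) : ℝ := (U.map fun u => ‖u‖).prod * ‖α‖

/-- The `r`-norm `‖A‖_{B^r}` on pointed chains: the infimum of `Σᵢ |Δ^{jᵢ}_{Uᵢ}(pᵢ;αᵢ)|_{jᵢ}`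
over all decompositions `A = Σᵢ Δ^{jᵢ}_{Uᵢ}(pᵢ;αᵢ)` with all `jᵢ ≤ r`. -/
noncomputable def Bnorm (r : ℕ) (A : E →₀ V) : ℝ :=
  sInf {s : ℝ | ∃ L : List (List E × E × V),
    (∀ t ∈ L, t.1.length ≤ r) ∧
    A = (L.map fun t => diffChain t.1 t.2.1 t.2.2).sum ∧
    s = (L.map fun t => dweight t.1 t.2.2).sum}

/- Every decomposition of `A` scales to one of `c • A` and two decompositions concatenate to one
of `A + B`, with weights scaled by `|c|` and added; passing to infima gives the seminorm
inequalities, and homogeneity follows from the inequality applied to `c` and `c⁻¹`. -/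

open Pointwise

section

omit [NormedSpace ℝ E]

section

omit [NormedSpace ℝ V]

variable (r : ℕ)

lemma dweight_nonneg (U : List E) (α : V) : 0 ≤ dweight U α :=
  mul_nonneg (List.prod_nonneg (by simp)) (norm_nonneg _)

def decompWeights (A : E →₀ V) : Set ℝ :=
  {s : ℝ | ∃ L : List (List E × E × V),
    (∀ t ∈ L, t.1.length ≤ r) ∧
    A = (L.map fun t => diffChain t.1 t.2.1 t.2.2).sum ∧
    s = (L.map fun t => dweight t.1 t.2.2).sum}

lemma Bnorm_eq_sInf_decompWeights (A : E →₀ V) : Bnorm r A = sInf (decompWeights r A) := rfl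

lemma nonneg_of_mem_decompWeights {A : E →₀ V} {s : ℝ} (hs : s ∈ decompWeights r A) : 0 ≤ s := by
  obtain ⟨L, -, -, rfl⟩ := hs
  exact List.sum_nonneg (List.forall_mem_map.2 fun t _ => dweight_nonneg t.1 t.2.2)

lemma bddBelow_decompWeights (A : E →₀ V) : BddBelow (decompWeights r A) :=
  ⟨0, fun _ => nonneg_of_mem_decompWeights r⟩

/-- `A = Σₚ (p; A p)` is a decomposition into difference chains of order `0`. -/
lemma decompWeights_nonempty (A : E →₀ V) : (decompWeights r A).Nonempty := by
  refine ⟨_, A.support.toList.map fun p => (([] : List E), p, A p), by simp, ?_, rfl⟩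
  simp only [List.map_map, Function.comp_def, diffChain, Finset.sum_map_toList]
  exact (Finsupp.sum_single A).symm

lemma decompWeights_add_subset (A B : E →₀ V) :
    decompWeights r A + decompWeights r B ⊆ decompWeights r (A + B) := by
  rintro _ ⟨_, ⟨L, hL, rfl, rfl⟩, _, ⟨M, hM, rfl, rfl⟩, rfl⟩
  refine ⟨L ++ M, ?_, by simp, by simp⟩
  intro t ht
  rcases List.mem_append.1 ht with h | h
  exacts [hL t h, hM t h]

lemma Bnorm_nonneg (A : E →₀ V) : 0 ≤ Bnorm r A :=
  le_csInf (decompWeights_nonempty r A) fun _ => nonneg_of_mem_decompWeights r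

lemma Bnorm_add_le (A B : E →₀ V) : Bnorm r (A + B) ≤ Bnorm r A + Bnorm r B := by
  simp only [Bnorm_eq_sInf_decompWeights]
  rw [← csInf_add (decompWeights_nonempty r A) (bddBelow_decompWeights r A)
    (decompWeights_nonempty r B) (bddBelow_decompWeights r B)]
  exact csInf_le_csInf (bddBelow_decompWeights r _)
    ((decompWeights_nonempty r A).add (decompWeights_nonempty r B)) (decompWeights_add_subset r A B)

end

lemma dweight_smul (c : ℝ) (U : List E) (α : V) : dweight U (c • α) = |c| * dweight U α := by
  simp only [dweight, norm_smul, Real.norm_eq_abs]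
  ring

lemma diffChain_smul (c : ℝ) : ∀ (U : List E) (p : E) (α : V),
    diffChain U p (c • α) = c • diffChain U p α
  | [], p, α => by simp [diffChain, Finsupp.smul_single]
  | u :: U, p, α => by simp [diffChain, diffChain_smul c U, Finsupp.mapDomain_smul, smul_sub]

variable (r : ℕ)

lemma smul_decompWeights_subset (c : ℝ) (A : E →₀ V) :
    |c| • decompWeights r A ⊆ decompWeights r (c • A) := by
  rintro _ ⟨_, ⟨L, hL, rfl, rfl⟩, rfl⟩
  refine ⟨L.map fun t => (t.1, t.2.1, c • t.2.2), List.forall_mem_map.2 hL, ?_, ?_⟩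
  · simp [List.smul_sum, Function.comp_def, diffChain_smul]
  · simp [Function.comp_def, dweight_smul, List.sum_map_mul_left]

lemma Bnorm_smul_le (c : ℝ) (A : E →₀ V) : Bnorm r (c • A) ≤ ‖c‖ * Bnorm r A := by
  simp only [Bnorm_eq_sInf_decompWeights, Real.norm_eq_abs]
  rw [← smul_eq_mul, ← Real.sInf_smul_of_nonneg (abs_nonneg c)]
  exact csInf_le_csInf (bddBelow_decompWeights r _)
    ((decompWeights_nonempty r A).smul_set) (smul_decompWeights_subset r c A)

lemma Bnorm_zero : Bnorm r (0 : E →₀ V) = 0 :=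
  le_antisymm (by simpa using Bnorm_smul_le r 0 (0 : E →₀ V)) (Bnorm_nonneg r 0)

noncomputable def Bseminorm : Seminorm ℝ (E →₀ V) :=
  .ofSMulLE (Bnorm r) (Bnorm_zero r) (Bnorm_add_le r) (Bnorm_smul_le r)

@[simp]
lemma coe_Bseminorm : ⇑(Bseminorm r : Seminorm ℝ (E →₀ V)) = Bnorm r := rfl

end

theorem Bnorm_is_seminorm_general (r : ℕ) :
    (∀ A : E →₀ V, 0 ≤ Bnorm r A) ∧
    Bnorm r (0 : E →₀ V) = 0 ∧
    (∀ (c : ℝ) (A : E →₀ V), Bnorm r (c • A) = |c| * Bnorm r A) ∧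
    (∀ A B : E →₀ V, Bnorm r (A + B) ≤ Bnorm r A + Bnorm r B) :=
  ⟨apply_nonneg (Bseminorm r), map_zero (Bseminorm r),
    fun c A => by simpa using map_smul_eq_mul (Bseminorm r) c A,
    map_add_le_add (Bseminorm r)⟩

/-- For each `r ≥ 1`, the `r`-norm `‖·‖_{B^r}` on pointed chains is a
seminorm: it is nonnegative, vanishes at `0`, is absolutely homogeneous, and subadditive. -/
theorem Bnorm_is_seminorm (r : ℕ) (hr : 1 ≤ r) :
    (∀ A : E →₀ V, 0 ≤ Bnorm r A) ∧
    Bnorm r (0 : E →₀ V) = 0 ∧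
    (∀ (c : ℝ) (A : E →₀ V), Bnorm r (c • A) = |c| * Bnorm r A) ∧
    (∀ A B : E →₀ V, Bnorm r (A + B) ≤ Bnorm r A + Bnorm r B) :=
  Bnorm_is_seminorm_general r
end

section
/- For every nonzero pointed k-chain A and every r ≥ 0, the r-norm ‖A‖_{B^r} is strictly positive. In particular ‖·‖_{B^r} is a norm on pointed k-chains. -/
/-! Pointed chains: finitely supported functions from points of `E` to "k-vectors" in `V`,
difference chains, and the `B^r` norms of J. Harrison's theory of differential chains. -/

open Finsupp

variable {E V : Type*} [NormedAddCommGroup E] [NormedSpace ℝ E]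
  [NormedAddCommGroup V] [NormedSpace ℝ V]

/-! Given `A ≠ 0`, choose `p` with `A p ≠ 0`, a functional `ℓ` of norm one with `ℓ (A p) = ‖A p‖`,
and a smooth bump `f` with `f p = 1` vanishing at the other points of the support of `A`. The
form `X = f ℓ` satisfies `X(A) = ‖A p‖`. Pairing `X` with a difference chain produces an iterated
forward difference of `f`, which the mean value theorem bounds by `‖u₁‖⋯‖u_j‖` times a bound `C`
on the first `r` derivatives of `f`; hence `|X(Δ^j_U(q;α))| ≤ C |Δ^j_U(q;α)|_j`. Summing over an
arbitrary decomposition of `A` gives `‖A p‖ ≤ C ‖A‖_{B^r}`. -/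
section IteratedFwdDiff

variable {F : Type*} [NormedAddCommGroup F] [NormedSpace ℝ F]

lemma foldr_fwdDiff_comp_add {M N : Type*} [AddCommMonoid M] [AddCommGroup N]
    (U : List M) (g : M → N) (u x : M) :
    U.foldr fwdDiff (fun y => g (y + u)) x = U.foldr fwdDiff g (x + u) := by
  induction U generalizing x with
  | nil => rfl
  | cons v V ih => simp only [List.foldr_cons, fwdDiff, ih, add_right_comm]

lemma ContDiff.foldr_fwdDiff {n : WithTop ℕ∞} {g : E → F} (hg : ContDiff ℝ n g) (U : List E) :
    ContDiff ℝ n (U.foldr fwdDiff g) := by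
  induction U with
  | nil => exact hg
  | cons u V ih => exact (ih.comp (contDiff_id.add contDiff_const)).sub ih

lemma iteratedFDeriv_fwdDiff {k : ℕ} {h : E → F} (hh : ContDiff ℝ k h) (u : E) :
    iteratedFDeriv ℝ k (fwdDiff u h) = fwdDiff u (iteratedFDeriv ℝ k h) := by
  ext1 x
  have hshift : ContDiff ℝ k (fun y => h (y + u)) := hh.comp (contDiff_id.add contDiff_const)
  change iteratedFDeriv ℝ k ((fun y => h (y + u)) - h) x = _
  rw [iteratedFDeriv_sub_apply hshift.contDiffAt hh.contDiffAt, iteratedFDeriv_comp_add_right]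
  rfl

lemma norm_iteratedFDeriv_foldr_fwdDiff_le (U : List E) {g : E → F} {C : ℝ} :
    ∀ k : ℕ, ContDiff ℝ (k + U.length : ℕ) g → (∀ x, ‖iteratedFDeriv ℝ (k + U.length) g x‖ ≤ C) →
      ∀ x, ‖iteratedFDeriv ℝ k (U.foldr fwdDiff g) x‖ ≤ (U.map (‖·‖)).prod * C := by
  induction U with
  | nil => simp
  | cons u V ih =>
    intro k hg hC x
    rw [List.length_cons, ← add_assoc, add_right_comm] at hg hC
    have hV : ContDiff ℝ (k + 1) (V.foldr fwdDiff g) :=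
      (hg.foldr_fwdDiff V).of_le (by exact_mod_cast le_self_add)
    have hderiv : ∀ y, ‖fderiv ℝ (iteratedFDeriv ℝ k (V.foldr fwdDiff g)) y‖ ≤
        (V.map (‖·‖)).prod * C := fun y => by
      rw [norm_fderiv_iteratedFDeriv]
      exact ih (k + 1) hg hC y
    have hmv := convex_univ.norm_image_sub_le_of_norm_fderiv_le
      (fun y _ => (hV.differentiable_iteratedFDeriv (by exact_mod_cast k.lt_succ_self) y))
      (fun y _ => hderiv y) (Set.mem_univ x) (Set.mem_univ (x + u))
    calc ‖iteratedFDeriv ℝ k ((u :: V).foldr fwdDiff g) x‖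
        = ‖iteratedFDeriv ℝ k (V.foldr fwdDiff g) (x + u) -
            iteratedFDeriv ℝ k (V.foldr fwdDiff g) x‖ := by
          rw [List.foldr_cons, iteratedFDeriv_fwdDiff (hV.of_le (by simp))]
          rfl
      _ ≤ (V.map (‖·‖)).prod * C * ‖u‖ := by simpa using hmv
      _ = ((u :: V).map (‖·‖)).prod * C := by simp only [List.map_cons, List.prod_cons]; ring

end IteratedFwdDiff

section Pairing

variable {E V : Type*} [NormedAddCommGroup V] [NormedSpace ℝ V]

/-- The form `X = g ℓ`, a scalar function times a constant covector, acting on pointed chains. -/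
noncomputable def pairing (g : E → ℝ) (ℓ : V →L[ℝ] ℝ) : (E →₀ V) →ₗ[ℝ] ℝ :=
  Finsupp.lsum ℝ fun q => g q • (ℓ : V →ₗ[ℝ] ℝ)

lemma pairing_apply (g : E → ℝ) (ℓ : V →L[ℝ] ℝ) (A : E →₀ V) :
    pairing g ℓ A = A.sum fun q v => g q * ℓ v := by
  simp [pairing, Finsupp.lsum_apply, Finsupp.sum]

lemma pairing_eq_of_eq_zero {g : E → ℝ} (ℓ : V →L[ℝ] ℝ) {A : E →₀ V} {p : E}
    (hg : ∀ q ∈ A.support, q ≠ p → g q = 0) :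
    pairing g ℓ A = g p * ℓ (A p) := by
  rw [pairing_apply]
  refine Finsupp.sum_eq_single p (fun q hq hqp => ?_) (by simp)
  rw [hg q (mem_support_iff.2 hq) hqp, zero_mul]

lemma pairing_mapDomain_add [Add E] (g : E → ℝ) (ℓ : V →L[ℝ] ℝ) (u : E) (B : E →₀ V) :
    pairing g ℓ (B.mapDomain (· + u)) = pairing (fun y => g (y + u)) ℓ B := by
  rw [pairing_apply, pairing_apply]
  exact Finsupp.sum_mapDomain_index (by simp) (by simp [mul_add])

lemma pairing_diffChain [NormedAddCommGroup E] (ℓ : V →L[ℝ] ℝ) (U : List E) :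
    ∀ (g : E → ℝ) (p : E) (α : V), pairing g ℓ (diffChain U p α) = U.foldr fwdDiff g p * ℓ α := by
  induction U with
  | nil => simp [diffChain, pairing_apply]
  | cons u V ih =>
    intro g p α
    rw [diffChain, map_sub, pairing_mapDomain_add, ih, ih, foldr_fwdDiff_comp_add, ← sub_mul]
    rfl

lemma abs_pairing_diffChain_le [NormedAddCommGroup E] [NormedSpace ℝ E] {U : List E}
    {g : E → ℝ} {C : ℝ} (hg : ContDiff ℝ U.length g)
    (hC : ∀ x, ‖iteratedFDeriv ℝ U.length g x‖ ≤ C) (ℓ : V →L[ℝ] ℝ) (p : E) (α : V) :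
    |pairing g ℓ (diffChain U p α)| ≤ C * ‖ℓ‖ * dweight U α := by
  have hdiff := norm_iteratedFDeriv_foldr_fwdDiff_le U 0 (by rwa [zero_add]) (by rwa [zero_add]) p
  rw [norm_iteratedFDeriv_zero] at hdiff
  rw [pairing_diffChain, abs_mul, dweight]
  calc |U.foldr fwdDiff g p| * |ℓ α| ≤ ((U.map (‖·‖)).prod * C) * (‖ℓ‖ * ‖α‖) :=
        mul_le_mul hdiff (ℓ.le_opNorm α) (abs_nonneg _) ((norm_nonneg _).trans hdiff)
    _ = C * ‖ℓ‖ * ((U.map (‖·‖)).prod * ‖α‖) := by ring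

end Pairing

section Bnorm

variable {E V : Type*} [NormedAddCommGroup E] [NormedAddCommGroup V]

lemma le_Bnorm {r : ℕ} {A : E →₀ V} {b : ℝ}
    (h : ∀ L : List (List E × E × V), (∀ t ∈ L, t.1.length ≤ r) →
      A = (L.map fun t => diffChain t.1 t.2.1 t.2.2).sum →
      b ≤ (L.map fun t => dweight t.1 t.2.2).sum) :
    b ≤ Bnorm r A := by
  refine le_csInf ⟨_, A.support.toList.map fun p => ([], p, A p), by simp, ?_, rfl⟩ ?_
  · simp only [List.map_map, Function.comp_def, diffChain, Finset.sum_map_toList]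
    exact A.sum_single.symm
  · rintro s ⟨L, hL, hA, rfl⟩
    exact h L hL hA

lemma abs_le_mul_Bnorm [NormedSpace ℝ V] (X : (E →₀ V) →ₗ[ℝ] ℝ) {r : ℕ} {C : ℝ} (hC : 0 < C)
    (hX : ∀ U p α, U.length ≤ r → |X (diffChain U p α)| ≤ C * dweight U α) (A : E →₀ V) :
    |X A| ≤ C * Bnorm r A := by
  rw [← div_le_iff₀' hC]
  refine le_Bnorm fun L hL hA => ?_
  rw [div_le_iff₀' hC, hA, map_list_sum, List.map_map, ← List.sum_map_mul_left]
  refine (List.le_sum_of_subadditive abs abs_zero.le abs_add_le _).trans ?_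
  rw [List.map_map]
  exact List.sum_le_sum fun t ht => hX t.1 t.2.1 t.2.2 (hL t ht)

end Bnorm

lemma exists_bound_iteratedFDeriv {F : Type*} [NormedAddCommGroup F] [NormedSpace ℝ F]
    {g : E → F} {r : ℕ} (hg : ContDiff ℝ r g) (hsupp : HasCompactSupport g) :
    ∃ C > 0, ∀ j ≤ r, ∀ x, ‖iteratedFDeriv ℝ j g x‖ ≤ C := by
  have hbound : ∀ j ∈ Set.Iic r, ∀ᶠ C in Filter.atTop, ∀ x, ‖iteratedFDeriv ℝ j g x‖ ≤ C := by
    intro j hj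
    obtain ⟨C₀, hC₀⟩ := (hsupp.iteratedFDeriv j).exists_bound_of_continuous
      (hg.continuous_iteratedFDeriv (by exact_mod_cast hj))
    filter_upwards [Filter.eventually_ge_atTop C₀] with C hC x using (hC₀ x).trans hC
  exact ((Filter.eventually_gt_atTop 0).and
    ((Filter.eventually_all_finite (Set.finite_Iic r)).2 hbound)).exists

lemma exists_contDiffBump_eq_zero [HasContDiffBump E] {S : Finset E} {p : E} (hp : p ∉ S) :
    ∃ f : ContDiffBump p, ∀ q ∈ S, f q = 0 := by
  obtain ⟨ε, hε, hball⟩ := Metric.isOpen_iff.1 S.finite_toSet.isClosed.isOpen_compl p hp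
  refine ⟨⟨ε / 2, ε, half_pos hε, half_lt_self hε⟩, fun q hq => ?_⟩
  rw [← Function.notMem_support, ContDiffBump.support_eq]
  exact fun hqball => hball hqball hq

/-- For every nonzero pointed chain `A` on `ℝⁿ` and every `r ≥ 0`, the
`r`-norm of `A` is strictly positive; in particular `‖·‖_{B^r}` is a norm. -/
theorem Bnorm_pos {n : ℕ} {V : Type*} [NormedAddCommGroup V] [NormedSpace ℝ V]
    (r : ℕ) (A : EuclideanSpace ℝ (Fin n) →₀ V) (hA : A ≠ 0) :
    0 < Bnorm r A := by
  obtain ⟨p, hp⟩ := Finsupp.ne_iff.1 hA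
  obtain ⟨ℓ, hℓ, hℓp⟩ := exists_dual_vector ℝ (A p) (norm_ne_zero_iff.2 hp)
  obtain ⟨f, hf⟩ := exists_contDiffBump_eq_zero (Finset.notMem_erase p A.support)
  obtain ⟨C, hC, hCf⟩ := exists_bound_iteratedFDeriv (f.contDiff (n := r)) f.hasCompactSupport
  have hXA : pairing f ℓ A = ‖A p‖ := by
    rw [pairing_eq_of_eq_zero ℓ fun q hq hqp => hf q (Finset.mem_erase.2 ⟨hqp, hq⟩),
      f.one_of_mem_closedBall (Metric.mem_closedBall_self f.rIn_pos.le), hℓp, one_mul]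
    rfl
  have hbound := abs_le_mul_Bnorm (pairing f ℓ) hC (fun U q α hU => by
    simpa [hℓ] using abs_pairing_diffChain_le f.contDiff (hCf _ hU) ℓ q α) A
  rw [hXA, abs_norm] at hbound
  exact pos_of_mul_pos_right ((norm_pos_iff.2 hp).trans_le hbound) hC.le
end
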